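/- Let R be a commutative ring and L a commutative Noetherian R-algebra. Fix an ideal J₀ of L, an R-derivation D : L → L, an R-algebra homomorphism σ : L → L, and an R-algebra homomorphism μ : L → L ⊗_R L. Call an ideal I of L admissible if I ⊆ J₀, D(I) ⊆ I, σ(I) ⊆ I, and μ(I) is contained in the R-submodule of L ⊗_R L generated by elements of the form a ⊗ x and y ⊗ b with a, b ∈ I and x, y ∈ L. Then there exists an admissible ideal I* of L containing every admissible ideal (a greatest admissible ideal). -/
import Mathlib


open TensorProduct

/-- An ideal `I` of `L` is *admissible* (with respect to an ideal `J₀`, an `R`-derivation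
`D`, an `R`-algebra endomorphism `σ`, and an `R`-algebra map `μ : L → L ⊗[R] L`) if
`I ⊆ J₀`, `D(I) ⊆ I`, `σ(I) ⊆ I`, and `μ(I)` is contained in the `R`-submodule of
`L ⊗[R] L` generated by the simple tensors `a ⊗ x` and `y ⊗ b` with `a, b ∈ I`. -/
def IsAdmissible {R L : Type*} [CommRing R] [CommRing L] [Algebra R L]
    (J₀ : Ideal L) (D : Derivation R L L) (σ : L →ₐ[R] L) (μ : L →ₐ[R] L ⊗[R] L)
    (I : Ideal L) : Prop :=
  I ≤ J₀ ∧ (∀ x ∈ I, D x ∈ I) ∧ (∀ x ∈ I, σ x ∈ I) ∧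
    ∀ x ∈ I, μ x ∈ Submodule.span R
      ({z : L ⊗[R] L | ∃ a ∈ I, ∃ w : L, z = a ⊗ₜ[R] w} ∪
       {z : L ⊗[R] L | ∃ b ∈ I, ∃ w : L, z = w ⊗ₜ[R] b})

/-- In a commutative Noetherian `R`-algebra `L`, given an ideal `J₀`, an `R`-derivation
`D`, an `R`-algebra endomorphism `σ`, and an `R`-algebra homomorphism
`μ : L → L ⊗[R] L`, there is a greatest admissible ideal. -/
theorem stmt_12 (R L : Type*) [CommRing R] [CommRing L] [Algebra R L]
    [IsNoetherianRing L]
    (J₀ : Ideal L) (D : Derivation R L L) (σ : L →ₐ[R] L) (μ : L →ₐ[R] L ⊗[R] L) :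
    ∃ Istar : Ideal L, IsAdmissible J₀ D σ μ Istar ∧
      ∀ I : Ideal L, IsAdmissible J₀ D σ μ I → I ≤ Istar := by
  -- the span set is monotone in I
  have spanmono : ∀ I I' : Ideal L, I ≤ I' →
      Submodule.span R
        ({z : L ⊗[R] L | ∃ a ∈ I, ∃ w : L, z = a ⊗ₜ[R] w} ∪
         {z : L ⊗[R] L | ∃ b ∈ I, ∃ w : L, z = w ⊗ₜ[R] b}) ≤
      Submodule.span R
        ({z : L ⊗[R] L | ∃ a ∈ I', ∃ w : L, z = a ⊗ₜ[R] w} ∪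
         {z : L ⊗[R] L | ∃ b ∈ I', ∃ w : L, z = w ⊗ₜ[R] b}) := by
    intro I I' h
    apply Submodule.span_mono
    rintro z (⟨a, ha, w, rfl⟩ | ⟨b, hb, w, rfl⟩)
    · exact Or.inl ⟨a, h ha, w, rfl⟩
    · exact Or.inr ⟨b, h hb, w, rfl⟩
  -- sup of two admissible ideals is admissible
  have sup_adm : ∀ I J : Ideal L, IsAdmissible J₀ D σ μ I → IsAdmissible J₀ D σ μ J →
      IsAdmissible J₀ D σ μ (I ⊔ J) := by
    rintro I J ⟨hI0, hID, hIσ, hIμ⟩ ⟨hJ0, hJD, hJσ, hJμ⟩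
    refine ⟨sup_le hI0 hJ0, ?_, ?_, ?_⟩
    · intro x hx
      rcases Submodule.mem_sup.mp hx with ⟨a, ha, b, hb, rfl⟩
      rw [map_add]
      exact Submodule.add_mem_sup (hID a ha) (hJD b hb)
    · intro x hx
      rcases Submodule.mem_sup.mp hx with ⟨a, ha, b, hb, rfl⟩
      rw [map_add]
      exact Submodule.add_mem_sup (hIσ a ha) (hJσ b hb)
    · intro x hx
      rcases Submodule.mem_sup.mp hx with ⟨a, ha, b, hb, rfl⟩
      rw [map_add]
      exact add_mem (spanmono I (I ⊔ J) le_sup_left (hIμ a ha))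
        (spanmono J (I ⊔ J) le_sup_right (hJμ b hb))
  -- ⊥ is admissible
  have bot_adm : IsAdmissible J₀ D σ μ ⊥ := by
    refine ⟨bot_le, ?_, ?_, ?_⟩ <;> intro x hx <;>
      simp only [Ideal.mem_bot] at hx <;> subst hx <;> simp
  -- Noetherian: take a maximal admissible ideal
  obtain ⟨M, hM, hmax⟩ :=
    (set_has_maximal_iff_noetherian.mpr ‹IsNoetherianRing L›)
      {I | IsAdmissible J₀ D σ μ I} ⟨⊥, bot_adm⟩
  refine ⟨M, hM, fun I hI => ?_⟩
  have h := sup_adm M I hM hI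
  have : ¬ M < M ⊔ I := fun hlt => hmax _ h hlt
  have : M ⊔ I = M := by
    rcases lt_or_eq_of_le (le_sup_left : M ≤ M ⊔ I) with hlt | heq
    · exact absurd hlt this
    · exact heq.symm
  exact le_sup_right.trans this.le
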